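/- Let x ∈ C_p with either |x|_p > 1, or |x|_p ≤ 1 and residue of x not in F_p (i.e. x ∈ W_p). Let f : C_p\{0} → C_p be locally analytic with f(p·y) = f(y) for all y ≠ 0, and set F(w) := ∫_{Z_p} (w+t) f(w+t) χ(w+t) dt. Then for every r ≥ 1, ∑_{k=0}^{p^r - 1} F((x+k)/p^r) = F(x). -/

import Mathlib

/-!
For `x ∈ W_p` every point `(x + k) / p^r + m` equals `(x + j) / p^r` with `j = p^r m + k`
and `|x + j| ≥ 1`; there `χ = 1` and `f((x + j) / p^r) = f(x + j)`, so the integrand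
`y f(y) χ(y)` at `(x + j) / p^r` is `p^{-r}` times its value at `x + j`. Summing the level-`n`
Riemann sums over `k` therefore gives, by the distribution property, the level-`(n + r)`
Riemann sum of `F(x)`.
-/

open Filter Finset Topology

theorem sum_range_mul_eq_sum_sum {M : Type*} [AddCommMonoid M] (g : ℕ → M) (a b : ℕ) :
    ∑ j ∈ range (a * b), g j = ∑ m ∈ range b, ∑ k ∈ range a, g (a * m + k) := by
  induction b with
  | zero => simp
  | succ b ih => rw [Nat.mul_succ, sum_range_add, ih, sum_range_succ]

section Volkenborn

variable {K : Type*} [Field K]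

def volkenbornSum (p : ℕ) (G : ℕ → K) (n : ℕ) : K :=
  ((p : K) ^ n)⁻¹ * ∑ j ∈ range (p ^ n), G j

theorem sum_volkenbornSum_residues (p : ℕ) (G : ℕ → K) (r n : ℕ) :
    ∑ k ∈ range (p ^ r), volkenbornSum p (fun m => ((p : K) ^ r)⁻¹ * G (p ^ r * m + k)) n
      = volkenbornSum p G (n + r) := by
  have hsplit : p ^ (n + r) = p ^ r * p ^ n := by rw [pow_add, mul_comm]
  rw [volkenbornSum, hsplit, sum_range_mul_eq_sum_sum, sum_comm, mul_sum]
  refine sum_congr rfl fun k _ => ?_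
  rw [volkenbornSum, ← mul_sum, ← mul_assoc, pow_add, mul_inv]

end Volkenborn

theorem apply_div_pow_eq_of_apply_mul_eq {K : Type*} [Field K] {f : K → K} {c : K} (hc : c ≠ 0)
    (hf : ∀ y ≠ 0, f (c * y) = f y) {y : K} (hy : y ≠ 0) (s : ℕ) : f (y / c ^ s) = f y := by
  induction s with
  | zero => simp
  | succ s ih =>
    have hmul : c * (y / c ^ (s + 1)) = y / c ^ s := by field_simp; ring
    rw [← ih, ← hmul, hf _ (div_ne_zero hy (pow_ne_zero _ hc))]

section Normed

variable {K : Type*} [NormedField K]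

theorem one_le_norm_add_natCast [IsUltrametricDist K] {x : K}
    (hx : 1 < ‖x‖ ∨ ∀ n : ℤ, 1 ≤ ‖x - n‖) (j : ℕ) : 1 ≤ ‖x + j‖ := by
  rcases hx with hx | hx
  · have hj := IsUltrametricDist.norm_natCast_le_one K j
    rw [IsUltrametricDist.norm_add_eq_max_of_norm_ne_norm (by linarith)]
    exact le_max_of_le_left hx.le
  · simpa using hx (-j)

/-- The integrand `y f(y) χ(y)`, with `χ` the indicator of `{y : 1 ≤ ‖y‖}`. -/
noncomputable def mulChi (f : K → K) (y : K) : K :=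
  y * f y * if 1 ≤ ‖y‖ then 1 else 0

theorem mulChi_div {f : K → K} {c y : K} (hc0 : c ≠ 0) (hc : ‖c‖ ≤ 1) (hy : 1 ≤ ‖y‖)
    (hf : f (y / c) = f y) : mulChi f (y / c) = c⁻¹ * mulChi f y := by
  have hyc : 1 ≤ ‖y / c‖ := by
    rw [norm_div]
    exact hy.trans (le_div_self (norm_nonneg y) (norm_pos_iff.2 hc0) hc)
  rw [mulChi, mulChi, if_pos hy, if_pos hyc, hf, div_eq_inv_mul]
  ring

end Normed

theorem F_sum_over_pr_of_Wp_general (p : ℕ) [Fact p.Prime] (K : Type*)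
    [NontriviallyNormedField K] [IsUltrametricDist K]
    [Algebra ℚ_[p] K]
    (x : K) (hx : 1 < ‖x‖ ∨ (‖x‖ ≤ 1 ∧ ∀ n : ℤ, 1 ≤ ‖x - (n : K)‖))
    (f : K → K)
    (hfp : ∀ y : K, y ≠ 0 → f ((p : K) * y) = f y)
    (F : K → K)
    (hF : ∀ w : K,
      Tendsto (fun n : ℕ => ((p : K) ^ n)⁻¹ * ∑ j ∈ Finset.range (p ^ n),
          ((w + (j : K)) * f (w + (j : K)) * (if 1 ≤ ‖w + (j : K)‖ then (1 : K) else 0)))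
        atTop (nhds (F w)))
    (r : ℕ) :
    ∑ k ∈ Finset.range (p ^ r), F ((x + (k : K)) / (p : K) ^ r) = F x := by
  have : CharZero K := charZero_of_injective_algebraMap (algebraMap ℚ_[p] K).injective
  have hp : (p : K) ≠ 0 := Nat.cast_ne_zero.2 (Fact.out : p.Prime).ne_zero
  have hpr : ‖(p : K) ^ r‖ ≤ 1 := by
    exact_mod_cast IsUltrametricDist.norm_natCast_le_one K (p ^ r)
  have hx1 := one_le_norm_add_natCast (hx.imp_right And.right)
  have hres : ∀ k m : ℕ, mulChi f ((x + k) / (p : K) ^ r + m)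
      = ((p : K) ^ r)⁻¹ * mulChi f (x + ↑(p ^ r * m + k)) := by
    intro k m
    have hxj := hx1 (p ^ r * m + k)
    have hshift : (x + k) / (p : K) ^ r + m = (x + ↑(p ^ r * m + k)) / (p : K) ^ r := by
      push_cast
      field_simp
      ring
    rw [hshift]
    exact mulChi_div (pow_ne_zero r hp) hpr hxj
      (apply_div_pow_eq_of_apply_mul_eq hp hfp (norm_ne_zero_iff.1 (by linarith)) r)
  have hlim : ∀ w, Tendsto (volkenbornSum p fun j => mulChi f (w + j)) atTop (𝓝 (F w)) := hF
  have hsum : ∀ n, ∑ k ∈ range (p ^ r),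
      volkenbornSum p (fun m => mulChi f ((x + k) / (p : K) ^ r + m)) n
      = volkenbornSum p (fun j => mulChi f (x + j)) (n + r) := by
    intro n
    simp_rw [hres]
    exact sum_volkenbornSum_residues p (fun j => mulChi f (x + j)) r n
  exact tendsto_nhds_unique ((tendsto_finsetSum _ fun k _ => hlim _).congr hsum)
    ((hlim x).comp (tendsto_add_atTop_nat r))

/-- Let `x ∈ W_p`, let `f` be locally analytic on `ℂ_p \ {0}` with `f(py) = f(y)`,
and let `F(w) = ∫_{ℤ_p} (w+t) f(w+t) χ(w+t) dt`.  Then for every `r ≥ 1`,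
`∑_{k=0}^{p^r-1} F((x+k)/p^r) = F(x)`. -/
theorem F_sum_over_pr_of_Wp (p : ℕ) [Fact p.Prime] (K : Type*)
    [NontriviallyNormedField K] [CompleteSpace K] [IsAlgClosed K] [IsUltrametricDist K]
    [Algebra ℚ_[p] K] (hiso : ∀ q : ℚ_[p], ‖algebraMap ℚ_[p] K q‖ = ‖q‖)
    (x : K) (hx : 1 < ‖x‖ ∨ (‖x‖ ≤ 1 ∧ ∀ n : ℤ, 1 ≤ ‖x - (n : K)‖))
    (f : K → K) (hfan : ∀ y : K, y ≠ 0 → AnalyticAt K f y)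
    (hfp : ∀ y : K, y ≠ 0 → f ((p : K) * y) = f y)
    (F : K → K)
    (hF : ∀ w : K,
      Tendsto (fun n : ℕ => ((p : K) ^ n)⁻¹ * ∑ j ∈ Finset.range (p ^ n),
          ((w + (j : K)) * f (w + (j : K)) * (if 1 ≤ ‖w + (j : K)‖ then (1 : K) else 0)))
        atTop (nhds (F w)))
    (r : ℕ) (hr : 1 ≤ r) :
    ∑ k ∈ Finset.range (p ^ r), F ((x + (k : K)) / (p : K) ^ r) = F x :=
  F_sum_over_pr_of_Wp_general p K x hx f hfp F hF r
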